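/- arXiv:1304.0296 — 6 statements merged into one kernel-verified Lean document; each statement's English description precedes it below -/
import Mathlib

section
/- If A is an n-by-n Hermitian matrix, then d(A) = min{i_{≥0}(A), i_{≤0}(A)}. In particular, i_0(A) ≤ d(A) ≤ ⌊(n + i_0(A))/2⌋. -/
open Matrix Polynomial

noncomputable def zdi {m : Type*} [Fintype m] (A : Matrix m m ℂ) : ℕ :=
  sSup {k : ℕ | ∃ V : Matrix m (Fin k) ℂ, Vᴴ * V = 1 ∧ Vᴴ * A * V = 0}

noncomputable def matRe {m : Type*} (A : Matrix m m ℂ) : Matrix m m ℂ :=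
  (2⁻¹ : ℂ) • (A + Aᴴ)

noncomputable def iNonneg {m : Type*} [Fintype m] [DecidableEq m] (M : Matrix m m ℂ) : ℕ :=
  if hM : M.IsHermitian then (Finset.univ.filter fun i => 0 ≤ hM.eigenvalues i).card else 0

def numRange {m : Type*} [Fintype m] (A : Matrix m m ℂ) : Set ℂ :=
  {z | ∃ x : m → ℂ, star x ⬝ᵥ x = 1 ∧ star x ⬝ᵥ A.mulVec x = z}

noncomputable def arg2pi (z : ℂ) : ℝ :=
  if 0 ≤ Complex.arg z then Complex.arg z else Complex.arg z + 2 * Real.pi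

def UnitSim {m : Type*} [Fintype m] [DecidableEq m] (A B : Matrix m m ℂ) : Prop :=
  ∃ U ∈ Matrix.unitaryGroup m ℂ, Uᴴ * A * U = B

def UnitSimG {m l : Type*} [Fintype m] [DecidableEq m] [Fintype l] [DecidableEq l]
    (A : Matrix m m ℂ) (B : Matrix l l ℂ) : Prop :=
  ∃ e : m ≃ l, UnitSim (Matrix.reindex e e A) B

def superMat (n : ℕ) (w : ℕ → ℂ) : Matrix (Fin n) (Fin n) ℂ :=
  Matrix.of fun i j => if (j : ℕ) = (i : ℕ) + 1 then w (i : ℕ) else 0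

def cycMat (n : ℕ) (w : ℕ → ℂ) : Matrix (Fin n) (Fin n) ℂ :=
  Matrix.of fun i j => if (j : ℕ) = ((i : ℕ) + 1) % n then w (i : ℕ) else 0

noncomputable def iNonpos {m : Type*} [Fintype m] [DecidableEq m] (M : Matrix m m ℂ) : ℕ :=
  if hM : M.IsHermitian then (Finset.univ.filter fun i => hM.eigenvalues i ≤ 0).card else 0

noncomputable def iZero {m : Type*} [Fintype m] [DecidableEq m] (M : Matrix m m ℂ) : ℕ :=
  if hM : M.IsHermitian then (Finset.univ.filter fun i => hM.eigenvalues i = 0).card else 0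

/-! Diagonalize `A = U D Uᴴ`: isometries `V` with `Vᴴ A V = 0` correspond to those with
`Vᴴ D V = 0`. If such a `V` has more columns than there are nonnegative eigenvalues, its range meets
the span of the coordinates of the negative eigenvalues, on which the quadratic form of `D` is
negative definite, so some nonzero `V c` would be isotropic; hence `d(A) ≤ i_{≥0}(A)`, and
`d(A) ≤ i_{≤0}(A)` follows for `-A`. Conversely, the coordinate vectors of the zero eigenvalues,
together with one unit vector `a e_p + b e_q` with `p a² + q b² = 0` for each of `min(i_+, i_-)`
disjoint pairs of a positive eigenvalue `p` and a negative eigenvalue `q`, have pairwise disjoint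
supports and so form such an isometry with `i_0 + min(i_+, i_-) = min(i_{≥0}, i_{≤0})` columns. -/

def IsZeroCompression {m ι : Type*} [Fintype m] [DecidableEq ι]
    (A : Matrix m m ℂ) (V : Matrix m ι ℂ) : Prop :=
  Vᴴ * V = 1 ∧ Vᴴ * A * V = 0

namespace IsZeroCompression

variable {m l ι κ : Type*} [Fintype m] [Fintype l] [DecidableEq ι] [DecidableEq κ]
  {A : Matrix m m ℂ} {V : Matrix m ι ℂ}

theorem neg (h : IsZeroCompression A V) : IsZeroCompression (-A) V :=
  ⟨h.1, by rw [Matrix.mul_neg, Matrix.neg_mul, h.2, neg_zero]⟩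

theorem of_conj [DecidableEq l] {R : Matrix m l ℂ} {W : Matrix l ι ℂ} (hR : Rᴴ * R = 1)
    (h : IsZeroCompression (Rᴴ * A * R) W) : IsZeroCompression A (R * W) := by
  constructor
  · rw [conjTranspose_mul, Matrix.mul_assoc, ← Matrix.mul_assoc Rᴴ, hR, Matrix.one_mul, h.1]
  · simpa only [conjTranspose_mul, Matrix.mul_assoc] using h.2

theorem submatrix_id_equiv [Fintype ι] [Fintype κ] (h : IsZeroCompression A V) (e : κ ≃ ι) :
    IsZeroCompression A (V.submatrix id e) := by
  constructor
  · rw [conjTranspose_submatrix, ← submatrix_mul _ _ _ _ _ Function.bijective_id, h.1,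
      submatrix_one_equiv]
  · rw [conjTranspose_submatrix, ← submatrix_id_id A,
      ← submatrix_mul _ _ _ _ _ Function.bijective_id,
      ← submatrix_mul _ _ _ _ _ Function.bijective_id, h.2]
    rfl

theorem of_submatrix [DecidableEq m] [DecidableEq l] {r : l → m} (hr : Function.Injective r)
    {W : Matrix l ι ℂ} (h : IsZeroCompression (A.submatrix r r) W) :
    IsZeroCompression A ((1 : Matrix m m ℂ).submatrix id r * W) := by
  refine of_conj ?_ ?_
  · rw [conjTranspose_submatrix, conjTranspose_one,
      ← submatrix_mul _ _ _ _ _ Function.bijective_id, Matrix.one_mul, submatrix_one _ hr]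
  · convert h using 1
    ext i j
    simp [Matrix.mul_apply, Matrix.one_apply]

theorem fromBlocks {B : Matrix l l ℂ} {W : Matrix l κ ℂ} (hV : IsZeroCompression A V)
    (hW : IsZeroCompression B W) :
    IsZeroCompression (Matrix.fromBlocks A 0 0 B) (Matrix.fromBlocks V 0 0 W) := by
  constructor
  · simp [fromBlocks_conjTranspose, fromBlocks_multiply, hV.1, hW.1, fromBlocks_one]
  · simp [fromBlocks_conjTranspose, fromBlocks_multiply, hV.2, hW.2]

end IsZeroCompression

theorem exists_isZeroCompression_iff_of_unitary_conj {m ι : Type*} [Fintype m] [DecidableEq m]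
    [DecidableEq ι] {A B U : Matrix m m ℂ} (hU : U ∈ unitaryGroup m ℂ) (hB : Uᴴ * A * U = B) :
    (∃ V : Matrix m ι ℂ, IsZeroCompression A V) ↔
      ∃ V : Matrix m ι ℂ, IsZeroCompression B V := by
  have h₁ : Uᴴ * U = 1 := mem_unitaryGroup_iff'.1 hU
  have h₂ : U * Uᴴ = 1 := mem_unitaryGroup_iff.1 hU
  constructor
  · rintro ⟨V, hV⟩
    refine ⟨Uᴴ * V, .of_conj (by rwa [conjTranspose_conjTranspose]) ?_⟩
    rwa [conjTranspose_conjTranspose, ← hB, ← Matrix.mul_assoc, ← Matrix.mul_assoc, h₂,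
      Matrix.one_mul, Matrix.mul_assoc, h₂, Matrix.mul_one]
  · rintro ⟨V, hV⟩
    exact ⟨U * V, .of_conj h₁ (hB ▸ hV)⟩

section Diagonal

variable {m ι : Type*} [Fintype m] [DecidableEq m]

theorem star_dotProduct_diagonal_mulVec (d : m → ℝ) (x : m → ℂ) :
    star x ⬝ᵥ (diagonal (fun i => (d i : ℂ)) *ᵥ x) =
      ((∑ i, d i * Complex.normSq (x i) : ℝ) : ℂ) := by
  simp only [dotProduct, mulVec_diagonal, Pi.star_apply, Complex.ofReal_sum, Complex.ofReal_mul,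
    Complex.normSq_eq_conj_mul_self, Complex.star_def]
  exact Finset.sum_congr rfl fun i _ => by ring

theorem eq_zero_of_star_dotProduct_diagonal_mulVec_eq_zero {d : m → ℝ} {x : m → ℂ}
    (hx : ∀ i, 0 ≤ d i → x i = 0)
    (h : star x ⬝ᵥ (diagonal (fun i => (d i : ℂ)) *ᵥ x) = 0) : x = 0 := by
  have hterm : ∀ i, d i * Complex.normSq (x i) ≤ 0 := fun i => by
    rcases le_or_gt 0 (d i) with hi | hi
    · simp [hx i hi]
    · exact mul_nonpos_of_nonpos_of_nonneg hi.le (Complex.normSq_nonneg _)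
  rw [star_dotProduct_diagonal_mulVec, Complex.ofReal_eq_zero,
    Finset.sum_eq_zero_iff_of_nonpos fun i _ => hterm i] at h
  ext i
  rcases le_or_gt 0 (d i) with hi | hi
  · exact hx i hi
  · simpa [hi.ne] using h i (Finset.mem_univ i)

theorem card_le_card_nonneg_of_isZeroCompression_diagonal [Fintype ι] [DecidableEq ι]
    {d : m → ℝ} {V : Matrix m ι ℂ} (h : IsZeroCompression (diagonal fun i => (d i : ℂ)) V) :
    Fintype.card ι ≤ Fintype.card {i // 0 ≤ d i} := by
  by_contra! hlt
  let T := LinearMap.funLeft ℂ ℂ (Subtype.val : {i // 0 ≤ d i} → m) ∘ₗ V.mulVecLin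
  obtain ⟨c, hc, hc0⟩ := Submodule.exists_mem_ne_zero_of_ne_bot <|
    LinearMap.ker_ne_bot_of_finrank_lt (f := T) (by simpa using hlt)
  have hx : V *ᵥ c = 0 := by
    refine eq_zero_of_star_dotProduct_diagonal_mulVec_eq_zero
      (fun i hi => congrFun hc ⟨i, hi⟩) ?_
    rw [star_mulVec, dotProduct_mulVec, vecMul_vecMul, ← dotProduct_mulVec, mulVec_mulVec,
      h.2, zero_mulVec, dotProduct_zero]
  apply hc0
  rw [← one_mulVec c, ← h.1, ← mulVec_mulVec, hx, mulVec_zero]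

end Diagonal

section Construction

variable {m ι : Type*} [Fintype m] [DecidableEq m] [Fintype ι] [DecidableEq ι]

theorem exists_sq_add_sq_eq_one_and_mul_sq_add_mul_sq_eq_zero {p q : ℝ} (hp : 0 < p)
    (hq : q < 0) : ∃ a b : ℝ, a ^ 2 + b ^ 2 = 1 ∧ p * a ^ 2 + q * b ^ 2 = 0 := by
  have hpq : 0 < p - q := by linarith
  refine ⟨√(-q / (p - q)), √(p / (p - q)), ?_, ?_⟩ <;>
    rw [Real.sq_sqrt (div_nonneg (by linarith) hpq.le), Real.sq_sqrt (div_nonneg hp.le hpq.le)] <;>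
    field_simp <;> ring

theorem exists_isZeroCompression_fromBlocks_diagonal {p q : ι → ℝ} (hp : ∀ i, 0 < p i)
    (hq : ∀ i, q i < 0) :
    ∃ V : Matrix (ι ⊕ ι) ι ℂ, IsZeroCompression
      (Matrix.fromBlocks (diagonal fun i => (p i : ℂ)) 0 0 (diagonal fun i => (q i : ℂ))) V := by
  choose a b hab hpq using fun i =>
    exists_sq_add_sq_eq_one_and_mul_sq_add_mul_sq_eq_zero (hp i) (hq i)
  let V : Matrix (ι ⊕ ι) ι ℂ :=
    fromRows (diagonal fun i => (a i : ℂ)) (diagonal fun i => (b i : ℂ))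
  refine ⟨V, ?_, ?_⟩
  · calc Vᴴ * V = diagonal fun i => ((a i ^ 2 + b i ^ 2 : ℝ) : ℂ) := by
          rw [conjTranspose_fromRows_eq_fromCols_conjTranspose, fromCols_mul_fromRows]
          simp [sq]
      _ = 1 := by simp [hab]
  · calc _ = diagonal fun i => ((p i * a i ^ 2 + q i * b i ^ 2 : ℝ) : ℂ) := by
          rw [conjTranspose_fromRows_eq_fromCols_conjTranspose, fromCols_mul_fromBlocks,
            fromCols_mul_fromRows]
          simp [sq, mul_comm, mul_left_comm]
      _ = 0 := by simp [hpq]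

theorem exists_isZeroCompression_diagonal (d : m → ℝ) :
    ∃ V : Matrix m ({i // d i = 0} ⊕
        Fin (min (Fintype.card {i // 0 < d i}) (Fintype.card {i // d i < 0}))) ℂ,
      IsZeroCompression (diagonal fun i => (d i : ℂ)) V := by
  set k := min (Fintype.card {i // 0 < d i}) (Fintype.card {i // d i < 0})
  let ep : Fin k ↪ {i // 0 < d i} :=
    (Fin.castLEEmb (min_le_left _ _)).trans (Fintype.equivFin _).symm.toEmbedding
  let en : Fin k ↪ {i // d i < 0} :=
    (Fin.castLEEmb (min_le_right _ _)).trans (Fintype.equivFin _).symm.toEmbedding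
  let r : {i // d i = 0} ⊕ (Fin k ⊕ Fin k) → m :=
    Sum.elim Subtype.val (Sum.elim (fun j => (ep j).1) (fun j => (en j).1))
  have hr : Function.Injective r := by
    refine Subtype.val_injective.sumElim
      ((Subtype.val_injective.comp ep.injective).sumElim (Subtype.val_injective.comp en.injective)
        fun j j' h => lt_asymm ((ep j).2.trans_eq (congrArg d h)) (en j').2) ?_
    rintro z (j | j) h
    · exact (ep j).2.ne' (congrArg d h ▸ z.2)
    · exact (en j).2.ne (congrArg d h ▸ z.2)
  have hblock : (diagonal fun i => (d i : ℂ)).submatrix r r = Matrix.fromBlocks 0 0 0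
      (Matrix.fromBlocks (diagonal fun j => (d (ep j) : ℂ)) 0 0
        (diagonal fun j => (d (en j) : ℂ))) := by
    rw [submatrix_diagonal _ _ hr, ← diagonal_zero, fromBlocks_diagonal, fromBlocks_diagonal]
    congr 1
    funext s
    rcases s with z | j | j
    · simp [r, z.2]
    all_goals rfl
  obtain ⟨W, hW⟩ :=
    exists_isZeroCompression_fromBlocks_diagonal (fun j => (ep j).2) (fun j => (en j).2)
  refine ⟨_, IsZeroCompression.of_submatrix hr (W := Matrix.fromBlocks 1 0 0 W) ?_⟩
  rw [hblock]
  exact IsZeroCompression.fromBlocks ⟨by simp, by simp⟩ hW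

end Construction

section Counting

variable {m α : Type*} [Fintype m] [LinearOrder α] (d : m → α) (c : α)

theorem Fintype.card_subtype_le_eq_card_lt_add_card_eq :
    Fintype.card {i // c ≤ d i} = Fintype.card {i // c < d i} + Fintype.card {i // d i = c} := by
  rw [← Fintype.card_subtype_or_disjoint]
  · exact Fintype.card_congr (Equiv.subtypeEquivRight fun i => by rw [le_iff_lt_or_eq, eq_comm])
  · exact disjoint_iff.2 (funext fun i => eq_false fun h => h.1.ne' h.2)

theorem Fintype.card_subtype_le_eq_card_lt_add_card_eq' :
    Fintype.card {i // d i ≤ c} = Fintype.card {i // d i < c} + Fintype.card {i // d i = c} :=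
  Fintype.card_subtype_le_eq_card_lt_add_card_eq (α := αᵒᵈ) d c

theorem Fintype.card_subtype_lt_add_card_le :
    Fintype.card {i // c < d i} + Fintype.card {i // d i ≤ c} = Fintype.card m := by
  simp_rw [← not_lt, Fintype.card_subtype_compl]
  have := Fintype.card_subtype_le (fun i => c < d i)
  omega

end Counting

namespace Matrix.IsHermitian

variable {m ι : Type*} [Fintype m] [DecidableEq m] [DecidableEq ι] {A : Matrix m m ℂ}

theorem exists_isZeroCompression_iff_diagonal (hA : A.IsHermitian) :
    (∃ V : Matrix m ι ℂ, IsZeroCompression A V) ↔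
      ∃ V : Matrix m ι ℂ, IsZeroCompression (diagonal fun i => (hA.eigenvalues i : ℂ)) V := by
  refine exists_isZeroCompression_iff_of_unitary_conj hA.eigenvectorUnitary.2 ?_
  have h := hA.conjStarAlgAut_star_eigenvectorUnitary
  rw [Unitary.conjStarAlgAut_star_apply, star_eq_conjTranspose] at h
  exact h

theorem card_le_of_isZeroCompression [Fintype ι] (hA : A.IsHermitian) {V : Matrix m ι ℂ}
    (hV : IsZeroCompression A V) :
    Fintype.card ι ≤ min (Fintype.card {i // 0 ≤ hA.eigenvalues i})
      (Fintype.card {i // hA.eigenvalues i ≤ 0}) := by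
  obtain ⟨W, hW⟩ := hA.exists_isZeroCompression_iff_diagonal.1 ⟨V, hV⟩
  refine le_min (card_le_card_nonneg_of_isZeroCompression_diagonal hW) ?_
  have hW' : IsZeroCompression (diagonal fun i => ((-hA.eigenvalues i : ℝ) : ℂ)) W := by
    simpa using hW.neg
  simpa using card_le_card_nonneg_of_isZeroCompression_diagonal hW'

theorem exists_isZeroCompression (hA : A.IsHermitian) :
    ∃ V : Matrix m (Fin (min (Fintype.card {i // 0 ≤ hA.eigenvalues i})
      (Fintype.card {i // hA.eigenvalues i ≤ 0}))) ℂ, IsZeroCompression A V := by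
  obtain ⟨W, hW⟩ := exists_isZeroCompression_diagonal hA.eigenvalues
  obtain ⟨V, hV⟩ := hA.exists_isZeroCompression_iff_diagonal.2 ⟨W, hW⟩
  refine ⟨_, hV.submatrix_id_equiv (Fintype.equivFinOfCardEq ?_).symm⟩
  rw [Fintype.card_sum, Fintype.card_fin, Fintype.card_subtype_le_eq_card_lt_add_card_eq,
    Fintype.card_subtype_le_eq_card_lt_add_card_eq', min_add_add_right, add_comm]

theorem zdi_eq (hA : A.IsHermitian) :
    zdi A = min (Fintype.card {i // 0 ≤ hA.eigenvalues i})
      (Fintype.card {i // hA.eigenvalues i ≤ 0}) := by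
  unfold zdi
  obtain ⟨V, hV⟩ := hA.exists_isZeroCompression
  exact IsGreatest.csSup_eq
    ⟨⟨V, hV⟩, fun k ⟨W, hW⟩ => by simpa using hA.card_le_of_isZeroCompression hW⟩

end Matrix.IsHermitian

/-- Corollary 2.3. -/
theorem zdi_hermitian {n : ℕ} (A : Matrix (Fin n) (Fin n) ℂ) (hA : A.IsHermitian) :
    zdi A = min (iNonneg A) (iNonpos A) ∧
    iZero A ≤ zdi A ∧ zdi A ≤ (n + iZero A) / 2 := by
  have hnonneg : iNonneg A = Fintype.card {i // 0 ≤ hA.eigenvalues i} := by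
    rw [iNonneg, dif_pos hA, Fintype.card_subtype]
  have hnonpos : iNonpos A = Fintype.card {i // hA.eigenvalues i ≤ 0} := by
    rw [iNonpos, dif_pos hA, Fintype.card_subtype]
  have hzero : iZero A = Fintype.card {i // hA.eigenvalues i = 0} := by
    rw [iZero, dif_pos hA, Fintype.card_subtype]
  have h₁ := Fintype.card_subtype_le_eq_card_lt_add_card_eq hA.eigenvalues 0
  have h₂ := Fintype.card_subtype_le_eq_card_lt_add_card_eq' hA.eigenvalues 0
  have h₃ := Fintype.card_subtype_lt_add_card_le hA.eigenvalues 0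
  rw [Fintype.card_fin] at h₃
  rw [hA.zdi_eq, hnonneg, hnonpos, hzero]
  exact ⟨rfl, by omega, by omega⟩
end

section
/- If A is an n-by-n complex matrix such that dim ker(Re(e^{−iθ₀}A)) ≤ 1 for some real θ₀, then d(A) ≤ ⌈n/2⌉. -/
/-!
Replacing `A` by `B = e^{-iθ₀} A` does not change `V* A V = 0`, and `V* B V = 0` forces
`V* (Re B) V = 0`. For an isometry `V : ℂᵏ → ℂⁿ` the map `(Re B) V` then has range inside
`ker V*`, of dimension `n - k`, and kernel embedded by `V` into `ker (Re B)`, of dimension at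
most `1`; rank–nullity gives `k - 1 ≤ n - k`.
-/

open Matrix Polynomial

open Module

theorem LinearMap.finrank_ker_comp_le_of_injective {K U V W : Type*} [Field K]
    [AddCommGroup U] [Module K U] [AddCommGroup V] [Module K V] [FiniteDimensional K V]
    [AddCommGroup W] [Module K W] (f : V →ₗ[K] W) {g : U →ₗ[K] V}
    (hg : Function.Injective g) :
    finrank K (ker (f ∘ₗ g)) ≤ finrank K (ker f) :=
  calc finrank K (ker (f ∘ₗ g))
      = finrank K ((ker (f ∘ₗ g)).map g) := (Submodule.equivMapOfInjective g hg _).finrank_eq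
    _ ≤ finrank K (ker f) := Submodule.finrank_mono (by
          rw [ker_comp]; exact Submodule.map_comap_le g (ker f))

section LeftInverse

variable {K m l : Type*} [Field K] [Fintype m] [Fintype l] [DecidableEq l]
  {W : Matrix l m K} {V : Matrix m l K}

theorem Matrix.leftInverse_mulVec_of_mul_eq_one (hWV : W * V = 1) :
    Function.LeftInverse W.mulVec V.mulVec := fun x => by
  rw [mulVec_mulVec, hWV, one_mulVec]

theorem Matrix.two_mul_card_le_card_add_finrank_ker (H : Matrix m m K) (hWV : W * V = 1)
    (hWHV : W * H * V = 0) :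
    2 * Fintype.card l ≤ Fintype.card m + finrank K (LinearMap.ker H.mulVecLin) := by
  have hinv := leftInverse_mulVec_of_mul_eq_one hWV
  have hker : finrank K (LinearMap.ker (H * V).mulVecLin)
      ≤ finrank K (LinearMap.ker H.mulVecLin) := by
    rw [mulVecLin_mul]
    exact H.mulVecLin.finrank_ker_comp_le_of_injective hinv.injective
  have hrange : finrank K (LinearMap.range (H * V).mulVecLin)
      ≤ finrank K (LinearMap.ker W.mulVecLin) := by
    refine Submodule.finrank_mono (LinearMap.range_le_ker_iff.mpr ?_)
    rw [← mulVecLin_mul, ← Matrix.mul_assoc, hWHV, mulVecLin_zero]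
  have hW := LinearMap.finrank_range_add_finrank_ker W.mulVecLin
  have hHV := LinearMap.finrank_range_add_finrank_ker (H * V).mulVecLin
  rw [LinearMap.range_eq_top.mpr hinv.surjective, finrank_top] at hW
  simp only [finrank_fintype_fun_eq_card] at hW hHV
  omega

end LeftInverse

theorem conjTranspose_mul_matRe_mul_eq_zero {m l : Type*} [Fintype m] {V : Matrix m l ℂ}
    {A : Matrix m m ℂ} (h : Vᴴ * A * V = 0) : Vᴴ * matRe A * V = 0 := by
  have h' : Vᴴ * Aᴴ * V = 0 := by
    simpa [conjTranspose_mul, Matrix.mul_assoc] using congrArg conjTranspose h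
  simp only [matRe, Matrix.mul_smul, Matrix.smul_mul, Matrix.mul_add, Matrix.add_mul, h, h',
    add_zero, smul_zero]

/-- Corollary 2.5. -/
theorem zdi_le_ceil_half_of_ker_re_le_one {n : ℕ} (A : Matrix (Fin n) (Fin n) ℂ) (θ₀ : ℝ)
    (h : Module.finrank ℂ
        (LinearMap.ker (matRe (Complex.exp (-(θ₀ : ℂ) * Complex.I) • A)).mulVecLin) ≤ 1) :
    zdi A ≤ (n + 1) / 2 := by
  refine csSup_le ⟨0, 0, Subsingleton.elim _ _, Subsingleton.elim _ _⟩ ?_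
  rintro k ⟨V, hV1, hV2⟩
  have hB : Vᴴ * (Complex.exp (-(θ₀ : ℂ) * Complex.I) • A) * V = 0 := by
    rw [Matrix.mul_smul, Matrix.smul_mul, hV2, smul_zero]
  have hk := two_mul_card_le_card_add_finrank_ker _ hV1 (conjTranspose_mul_matRe_mul_eq_zero hB)
  rw [Fintype.card_fin, Fintype.card_fin] at hk
  omega
end

section
/- Let n ≥ 1 and let A be the n-by-n complex matrix with entries A(j, j+1) = w_j for 1 ≤ j ≤ n−1, where w_1, …, w_{n−1} are all nonzero, and all other entries equal to 0. Then d(A) = ⌈n/2⌉, and moreover i_{≥0}(Re(e^{−iθ}A)) = ⌈n/2⌉ for every real θ. -/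
open Matrix Polynomial

/-!
Write `A = superMat n w` and `H = Re (e^{-iθ} A)`. Both are lower Hessenberg with nonzero
superdiagonal, so a kernel vector whose first coordinate vanishes is zero and both have nullity at
most one. Both are supported on entries `(i, j)` with `i + j` odd, so conjugation by
`diag ((-1)^i)` negates them.

For `d(A)`: the coordinate vectors `e₀, e₂, e₄, …` span a subspace of dimension `⌈n/2⌉` on which
the compression of `A` vanishes. Conversely, if `V* A V = 0` for an isometry `V` of rank `k`, then
`A V` maps `ℂᵏ` with kernel of dimension at most one into `ker V*`, of dimension `n - k`, so
`k - 1 ≤ n - k`.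

For the inertia: `H` and `-H` have the same characteristic polynomial, so `H` has as many positive
as negative eigenvalues, and at most one zero eigenvalue; hence `i_{≥0}(H) = ⌈n/2⌉`.
-/

namespace Matrix

variable {K : Type*} [Field K] {n : ℕ}

structure IsUnreducedLowerHessenberg (M : Matrix (Fin n) (Fin n) K) : Prop where
  eq_zero : ∀ i j : Fin n, (i : ℕ) + 1 < j → M i j = 0
  ne_zero : ∀ i j : Fin n, (j : ℕ) = i + 1 → M i j ≠ 0

namespace IsUnreducedLowerHessenberg

variable {M : Matrix (Fin n) (Fin n) K}

theorem eq_zero_of_mulVec_eq_zero [NeZero n] (hM : M.IsUnreducedLowerHessenberg)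
    {x : Fin n → K} (hx : M *ᵥ x = 0) (hx₀ : x 0 = 0) : x = 0 := by
  suffices h : ∀ k, ∀ j : Fin n, (j : ℕ) ≤ k → x j = 0 from funext fun j => h j j le_rfl
  intro k
  induction k with
  | zero => intro j hj; rwa [show j = 0 from Fin.ext (by simpa using hj)]
  | succ k ih =>
    intro j hj
    rcases hj.lt_or_eq with hj | hj
    · exact ih j (by omega)
    -- Row `k` of `M *ᵥ x = 0` involves only `x 0, …, x (k + 1)`, and all but the last vanish.
    let i : Fin n := ⟨k, by omega⟩
    have hrow : (M *ᵥ x) i = M i j * x j := by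
      refine Finset.sum_eq_single j (fun l _ hl => ?_) (fun hj => (hj (Finset.mem_univ j)).elim)
      by_cases hlk : (l : ℕ) ≤ k
      · exact mul_eq_zero_of_right _ (ih l hlk)
      · have := Fin.val_ne_iff.mpr hl
        exact mul_eq_zero_of_left (hM.eq_zero i l (by simp only [i]; omega)) _
    have hzero : M i j * x j = 0 := by rw [← hrow, hx, Pi.zero_apply]
    exact (mul_eq_zero.mp hzero).resolve_left (hM.ne_zero i j (by simp only [i]; omega))

theorem finrank_ker_le_one (hM : M.IsUnreducedLowerHessenberg) :
    Module.finrank K (LinearMap.ker M.mulVecLin) ≤ 1 := by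
  rcases n with _ | n
  · exact (Submodule.finrank_le _).trans (by simp)
  calc Module.finrank K (LinearMap.ker M.mulVecLin)
      ≤ Module.finrank K K := LinearMap.finrank_le_finrank_of_injective
        (f := (LinearMap.proj 0).comp (LinearMap.ker M.mulVecLin).subtype)
        ((injective_iff_map_eq_zero _).mpr fun x hx₀ =>
          Subtype.ext (hM.eq_zero_of_mulVec_eq_zero x.2 hx₀))
    _ = 1 := Module.finrank_self K

end IsUnreducedLowerHessenberg

end Matrix

section Compression

variable {K : Type*} [Field K] {m : Type*} [Fintype m] {k : ℕ}

theorem two_mul_le_card_add_one_of_mul_mul_eq_zero {A : Matrix m m K} {V : Matrix m (Fin k) K}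
    {W : Matrix (Fin k) m K} (hA : Module.finrank K (LinearMap.ker A.mulVecLin) ≤ 1)
    (hWV : W * V = 1) (hWAV : W * A * V = 0) : 2 * k ≤ Fintype.card m + 1 := by
  have hV : Function.LeftInverse W.mulVecLin V.mulVecLin := fun x => by
    simp [Matrix.mulVec_mulVec, hWV]
  have hker : Module.finrank K (LinearMap.ker (A * V).mulVecLin) ≤
      Module.finrank K (LinearMap.ker A.mulVecLin) :=
    LinearMap.finrank_le_finrank_of_injective
      (f := V.mulVecLin.restrict fun x hx => by
        simpa [Matrix.mulVec_mulVec] using hx)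
      fun x y hxy => Subtype.ext (hV.injective (congrArg Subtype.val hxy))
  have hrange : LinearMap.range (A * V).mulVecLin ≤ LinearMap.ker W.mulVecLin := by
    rintro _ ⟨x, rfl⟩
    simp [Matrix.mulVec_mulVec, ← Matrix.mul_assoc, hWAV]
  have hW : LinearMap.range W.mulVecLin = ⊤ := LinearMap.range_eq_top.mpr hV.surjective
  have hAV := LinearMap.finrank_range_add_finrank_ker (A * V).mulVecLin
  have hWrn := LinearMap.finrank_range_add_finrank_ker W.mulVecLin
  rw [hW, finrank_top] at hWrn
  simp only [Module.finrank_fintype_fun_eq_card, Fintype.card_fin] at hAV hWrn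
  have := Submodule.finrank_mono hrange
  omega

theorem exists_isometry_compression_eq_zero [DecidableEq m] {R : Type*} [Semiring R] [StarRing R]
    {A : Matrix m m R} (e : Fin k ↪ m) (hA : A.submatrix e e = 0) :
    ∃ V : Matrix m (Fin k) R, Vᴴ * V = 1 ∧ Vᴴ * A * V = 0 := by
  let V : Matrix m (Fin k) R := (1 : Matrix m m R).submatrix id e
  have hV (M : Matrix m m R) : Vᴴ * M * V = M.submatrix e e := by
    have hleft : Vᴴ * M = M.submatrix e id := by
      simpa [V, Matrix.conjTranspose_submatrix] using Matrix.one_submatrix_mul e (Equiv.refl m) M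
    rw [hleft]
    exact Matrix.mul_submatrix_one (Equiv.refl m) e _
  refine ⟨V, ?_, hV A ▸ hA⟩
  simpa [Matrix.submatrix_one_embedding] using hV 1

theorem zdi_eq_of_submatrix_eq_zero {A : Matrix m m ℂ}
    (hA : Module.finrank ℂ (LinearMap.ker A.mulVecLin) ≤ 1) (e : Fin k ↪ m)
    (he : A.submatrix e e = 0) (hk : Fintype.card m ≤ 2 * k) : zdi A = k := by
  classical
  refine IsGreatest.csSup_eq ⟨exists_isometry_compression_eq_zero e he, ?_⟩
  rintro l ⟨V, hV, hAV⟩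
  have := two_mul_le_card_add_one_of_mul_mul_eq_zero hA hV hAV
  omega

end Compression

section Inertia

open Finset

variable {m : Type*} [Fintype m] [DecidableEq m]

theorem Matrix.charpoly_neg_eq_of_involutive_conj {R : Type*} [CommRing R]
    {A S : Matrix m m R} (hS : S * S = 1) (hSAS : S * A * S = -A) :
    (-A).charpoly = A.charpoly := by
  rw [← hSAS, Matrix.mul_assoc, Matrix.charpoly_mul_comm, Matrix.mul_assoc, hS, Matrix.mul_one]

namespace Matrix.IsHermitian

variable {A : Matrix m m ℂ} (hA : A.IsHermitian)
include hA

theorem roots_charpoly_neg :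
    (-A).charpoly.roots = Multiset.map (fun i => -(hA.eigenvalues i : ℂ)) Finset.univ.val := by
  have hcharpoly : (-A).charpoly = ∏ i, (X - C (-(hA.eigenvalues i : ℂ))) := by
    conv_lhs => rw [hA.spectral_theorem, ← map_neg, Unitary.conjStarAlgAut_apply,
      charpoly_mul_comm, ← mul_assoc]
    simp [charpoly_diagonal]
  rw [hcharpoly, Polynomial.roots_prod]
  · simp
  · exact Finset.prod_ne_zero_iff.mpr fun i _ => X_sub_C_ne_zero _

theorem card_pos_eigenvalues_eq_card_neg (h : (-A).charpoly = A.charpoly) :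
    #{i | 0 < hA.eigenvalues i} = #{i | hA.eigenvalues i < 0} := by
  have hroots := congrArg (Multiset.countP fun z : ℂ => z.re < 0)
    (hA.roots_charpoly_neg.symm.trans (h ▸ hA.roots_charpoly_eq_eigenvalues))
  simpa [Multiset.countP_map, Finset.card_def, Finset.filter_val] using hroots

theorem card_zero_eigenvalues_eq_finrank_ker :
    #{i | hA.eigenvalues i = 0} = Module.finrank ℂ (LinearMap.ker A.mulVecLin) := by
  have hrank := hA.rank_eq_card_non_zero_eigs
  have hrn := LinearMap.finrank_range_add_finrank_ker A.mulVecLin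
  have hzero : #{i | hA.eigenvalues i = 0} ≤ Fintype.card m := Finset.card_le_univ _
  rw [Fintype.card_subtype_compl, Fintype.card_subtype, Matrix.rank] at hrank
  rw [Module.finrank_fintype_fun_eq_card] at hrn
  omega

end Matrix.IsHermitian

theorem iNonneg_eq_of_charpoly_neg_eq {A : Matrix m m ℂ} (hA : A.IsHermitian)
    (hneg : (-A).charpoly = A.charpoly)
    (hker : Module.finrank ℂ (LinearMap.ker A.mulVecLin) ≤ 1) :
    iNonneg A = (Fintype.card m + 1) / 2 := by
  have hsign : ∀ x : ℝ, 2 * (if 0 ≤ x then 1 else 0) + (if x < 0 then 1 else 0) =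
      1 + (if x = 0 then 1 else 0) + (if 0 < x then 1 else 0) := by
    intro x
    rcases lt_trichotomy x 0 with hx | rfl | hx
    · simp [hx, hx.not_ge, hx.ne, hx.le]
    · simp
    · simp [hx, hx.le, hx.not_gt, hx.ne']
  have hcount : 2 * #{i | 0 ≤ hA.eigenvalues i} + #{i | hA.eigenvalues i < 0} =
      Fintype.card m + #{i | hA.eigenvalues i = 0} + #{i | 0 < hA.eigenvalues i} := by
    simp only [Finset.card_filter, Finset.mul_sum, ← Finset.sum_add_distrib, hsign]
    simp only [Finset.sum_add_distrib, Finset.sum_const, Finset.card_univ, smul_eq_mul, mul_one]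
  have hpn := hA.card_pos_eigenvalues_eq_card_neg hneg
  have hzero := hA.card_zero_eigenvalues_eq_finrank_ker
  rw [iNonneg, dif_pos hA]
  omega

end Inertia

section AltSign

variable {R : Type*} [Ring R] {n : ℕ}

def altSign (n : ℕ) : Matrix (Fin n) (Fin n) R :=
  Matrix.diagonal fun i => (-1) ^ (i : ℕ)

theorem altSign_mul_self : altSign n * altSign n = (1 : Matrix (Fin n) (Fin n) R) := by
  rw [altSign, Matrix.diagonal_mul_diagonal, ← Matrix.diagonal_one]
  congr 1
  funext i
  rw [← pow_add, Even.neg_one_pow ⟨_, rfl⟩]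

theorem altSign_mul_mul_altSign {M : Matrix (Fin n) (Fin n) R}
    (hM : ∀ i j : Fin n, Even ((i : ℕ) + j) → M i j = 0) :
    altSign n * M * altSign n = -M := by
  ext i j
  rw [altSign, Matrix.mul_diagonal, Matrix.diagonal_mul, Matrix.neg_apply]
  rcases Nat.even_or_odd ((i : ℕ) + j) with h | h
  · simp [hM i j h]
  · rw [((Commute.neg_one_left (M i j)).pow_left _).eq, mul_assoc, ← pow_add, h.neg_one_pow,
      mul_neg_one]

end AltSign

section SuperMat

variable {n : ℕ} {w : ℕ → ℂ}

theorem smul_superMat (z : ℂ) (n : ℕ) (w : ℕ → ℂ) :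
    z • superMat n w = superMat n fun j => z * w j := by
  ext i j
  simp only [superMat, Matrix.smul_apply, Matrix.of_apply, smul_eq_mul, mul_ite, mul_zero]

theorem matRe_superMat_apply (i j : Fin n) :
    matRe (superMat n w) i j =
      2⁻¹ * ((if (j : ℕ) = i + 1 then w i else 0) + if (i : ℕ) = j + 1 then star (w j) else 0) := by
  simp only [matRe, superMat, Matrix.smul_apply, Matrix.add_apply, Matrix.conjTranspose_apply,
    Matrix.of_apply, smul_eq_mul]
  split_ifs <;> simp

theorem isHermitian_matRe {m : Type*} (A : Matrix m m ℂ) : (matRe A).IsHermitian := by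
  rw [Matrix.IsHermitian, matRe, Matrix.conjTranspose_smul, Matrix.conjTranspose_add,
    Matrix.conjTranspose_conjTranspose, add_comm, star_inv₀, star_ofNat]

theorem isUnreducedLowerHessenberg_superMat (hw : ∀ j, j < n - 1 → w j ≠ 0) :
    (superMat n w).IsUnreducedLowerHessenberg where
  eq_zero i j hij := if_neg (by omega)
  ne_zero i j hij := by
    rw [superMat, Matrix.of_apply, if_pos hij]
    exact hw i (by omega)

theorem isUnreducedLowerHessenberg_matRe_superMat (hw : ∀ j, j < n - 1 → w j ≠ 0) :
    (matRe (superMat n w)).IsUnreducedLowerHessenberg where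
  eq_zero i j hij := by
    rw [matRe_superMat_apply, if_neg (by omega), if_neg (by omega)]
    simp
  ne_zero i j hij := by
    rw [matRe_superMat_apply, if_pos hij, if_neg (by omega)]
    simpa using hw i (by omega)

theorem charpoly_neg_matRe_superMat (n : ℕ) (w : ℕ → ℂ) :
    (-matRe (superMat n w)).charpoly = (matRe (superMat n w)).charpoly := by
  refine Matrix.charpoly_neg_eq_of_involutive_conj altSign_mul_self
    (altSign_mul_mul_altSign fun i j ⟨r, hr⟩ => ?_)
  rw [matRe_superMat_apply, if_neg (by omega), if_neg (by omega)]
  simp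

theorem exists_submatrix_superMat_eq_zero (n : ℕ) (w : ℕ → ℂ) :
    ∃ e : Fin ((n + 1) / 2) ↪ Fin n, (superMat n w).submatrix e e = 0 :=
  ⟨⟨fun j => ⟨2 * j, by omega⟩, fun a b hab => Fin.ext (by simpa using hab)⟩,
    by ext a b; exact if_neg (show ¬2 * (b : ℕ) = 2 * a + 1 by omega)⟩

end SuperMat

theorem zdi_superMat_general {n : ℕ} (w : ℕ → ℂ) (hw : ∀ j, j < n - 1 → w j ≠ 0) :
    zdi (superMat n w) = (n + 1) / 2 ∧
    ∀ θ : ℝ, iNonneg (matRe (Complex.exp (-(θ : ℂ) * Complex.I) • superMat n w)) = (n + 1) / 2 := by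
  refine ⟨?_, fun θ => ?_⟩
  · obtain ⟨e, he⟩ := exists_submatrix_superMat_eq_zero n w
    exact zdi_eq_of_submatrix_eq_zero (isUnreducedLowerHessenberg_superMat hw).finrank_ker_le_one
      e he (by rw [Fintype.card_fin]; omega)
  · have hw' : ∀ j, j < n - 1 → Complex.exp (-(θ : ℂ) * Complex.I) * w j ≠ 0 :=
      fun j hj => mul_ne_zero (Complex.exp_ne_zero _) (hw j hj)
    rw [smul_superMat]
    simpa using iNonneg_eq_of_charpoly_neg_eq (isHermitian_matRe _) (charpoly_neg_matRe_superMat _ _)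
      (isUnreducedLowerHessenberg_matRe_superMat hw').finrank_ker_le_one

/-- Corollary 2.7. -/
theorem zdi_superMat {n : ℕ} (hn : 1 ≤ n) (w : ℕ → ℂ) (hw : ∀ j, j < n - 1 → w j ≠ 0) :
    zdi (superMat n w) = (n + 1) / 2 ∧
    ∀ θ : ℝ, iNonneg (matRe (Complex.exp (-(θ : ℂ) * Complex.I) • superMat n w)) = (n + 1) / 2 :=
  zdi_superMat_general w hw
end

section
/- If A is an n-by-n complex matrix with d(A) > ⌊n/2⌋, then 0 is an eigenvalue of A with geometric multiplicity at least 2d(A) − n, i.e., dim ker A ≥ 2d(A) − n. Moreover, the bound ⌊n/2⌋ is sharp: for every n ≥ 1 there exists an n-by-n matrix A with d(A) = ⌊n/2⌋ such that 0 is not an eigenvalue of A. -/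
open Matrix Polynomial

/-!
If `Vᴴ V = 1` and `Vᴴ A V = 0` for an `n × k` matrix `V`, then `A V` has rank at least
`k - dim ker A`, because `V` is injective, and at most `n - k`, because its range lies in the
kernel of the rank-`k` matrix `Vᴴ`; hence `dim ker A ≥ 2k - n`. For sharpness, the reversal
permutation matrix is invertible and its compression to the first `⌊n/2⌋` coordinates vanishes,
since it maps them onto the last `⌊n/2⌋`.
-/

open Module

theorem Submodule.finrank_le_finrank_map_add_finrank_ker {K V W : Type*} [DivisionRing K]
    [AddCommGroup V] [Module K V] [AddCommGroup W] [Module K W] [FiniteDimensional K V]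
    (f : V →ₗ[K] W) (p : Submodule K V) :
    finrank K p ≤ finrank K (p.map f) + finrank K (LinearMap.ker f) := by
  rw [← LinearMap.range_domRestrict, ← (f.domRestrict p).finrank_range_add_finrank_ker]
  gcongr
  calc finrank K (LinearMap.ker (f.domRestrict p))
      = finrank K ((LinearMap.ker (f.domRestrict p)).map p.subtype) :=
        (Submodule.finrank_map_subtype_eq _ _).symm
    _ ≤ finrank K (LinearMap.ker f) := Submodule.finrank_mono (by rintro _ ⟨x, hx, rfl⟩; exact hx)

namespace Matrix

variable {K : Type*} [Field K] {l m n : Type*} [Fintype m] [Fintype n]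

theorem rank_le_rank_mul_add_finrank_ker (A : Matrix l m K) (B : Matrix m n K) :
    B.rank ≤ (A * B).rank + finrank K (LinearMap.ker A.mulVecLin) := by
  rw [rank, rank, mulVecLin_mul, LinearMap.range_comp]
  exact Submodule.finrank_le_finrank_map_add_finrank_ker _ _

variable [Fintype l] [DecidableEq l]

theorem rank_left_eq_card_of_mul_eq_one {W : Matrix l m K} {V : Matrix m l K} (h : W * V = 1) :
    W.rank = Fintype.card l :=
  le_antisymm W.rank_le_card_height (by simpa [h] using rank_mul_le_left W V)

theorem rank_right_eq_card_of_mul_eq_one {W : Matrix l m K} {V : Matrix m l K} (h : W * V = 1) :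
    V.rank = Fintype.card l :=
  le_antisymm V.rank_le_card_width (by simpa [h] using rank_mul_le_right W V)

theorem card_le_card_of_mul_eq_one {W : Matrix l m K} {V : Matrix m l K} (h : W * V = 1) :
    Fintype.card l ≤ Fintype.card m :=
  rank_left_eq_card_of_mul_eq_one h ▸ W.rank_le_card_width

theorem two_mul_card_sub_card_le_finrank_ker (A : Matrix m m K) {W : Matrix l m K}
    {V : Matrix m l K} (hWV : W * V = 1) (hWAV : W * A * V = 0) :
    2 * Fintype.card l - Fintype.card m ≤ finrank K (LinearMap.ker A.mulVecLin) := by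
  have hW := rank_left_eq_card_of_mul_eq_one hWV
  have hV := rank_right_eq_card_of_mul_eq_one hWV
  have hAV : W.rank + (A * V).rank ≤ Fintype.card m :=
    rank_add_rank_le_card_of_mul_eq_zero (by rw [← Matrix.mul_assoc]; exact hWAV)
  have := rank_le_rank_mul_add_finrank_ker A V
  omega

end Matrix

section ZeroDilationIndex

variable {m : Type*} [Fintype m]

theorem bddAbove_zdi_set (A : Matrix m m ℂ) :
    BddAbove {k : ℕ | ∃ V : Matrix m (Fin k) ℂ, Vᴴ * V = 1 ∧ Vᴴ * A * V = 0} :=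
  ⟨Fintype.card m, fun k ⟨_, hV, _⟩ => by simpa using card_le_card_of_mul_eq_one hV⟩

theorem le_zdi {A : Matrix m m ℂ} {k : ℕ} {V : Matrix m (Fin k) ℂ} (hV : Vᴴ * V = 1)
    (hAV : Vᴴ * A * V = 0) : k ≤ zdi A :=
  le_csSup (bddAbove_zdi_set A) ⟨V, hV, hAV⟩

theorem exists_zero_compression_zdi (A : Matrix m m ℂ) :
    ∃ V : Matrix m (Fin (zdi A)) ℂ, Vᴴ * V = 1 ∧ Vᴴ * A * V = 0 := by
  apply Nat.sSup_mem _ (bddAbove_zdi_set A)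
  exact ⟨0, 0, Subsingleton.elim _ _, Subsingleton.elim _ _⟩

theorem two_mul_zdi_sub_card_le_finrank_ker (A : Matrix m m ℂ) :
    2 * zdi A - Fintype.card m ≤ finrank ℂ (LinearMap.ker A.mulVecLin) := by
  obtain ⟨V, hV, hAV⟩ := exists_zero_compression_zdi A
  simpa using two_mul_card_sub_card_le_finrank_ker A hV hAV

theorem zdi_le_card_div_two_of_ker_eq_bot {A : Matrix m m ℂ}
    (hA : LinearMap.ker A.mulVecLin = ⊥) : zdi A ≤ Fintype.card m / 2 := by
  have := two_mul_zdi_sub_card_le_finrank_ker A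
  rw [hA, finrank_bot] at this
  omega

theorem le_zdi_of_submatrix_eq_zero [DecidableEq m] {A : Matrix m m ℂ} {k : ℕ} {e : Fin k → m}
    (he : Function.Injective e) (hA : A.submatrix e e = 0) : k ≤ zdi A := by
  let V : Matrix m (Fin k) ℂ := (1 : Matrix m m ℂ).submatrix id e
  have hVH : Vᴴ = (1 : Matrix m m ℂ).submatrix e id := by
    simp [V, conjTranspose_submatrix]
  refine le_zdi (V := V) ?_ ?_
  · rw [hVH]; ext i j; simp [V, mul_apply, one_apply, he.eq_iff]
  · rw [hVH, ← hA]; ext i j; simp [V, mul_apply, one_apply]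

end ZeroDilationIndex

theorem ker_mulVecLin_permMatrix {K m : Type*} [Field K] [Fintype m] [DecidableEq m]
    (σ : Equiv.Perm m) : LinearMap.ker (σ.permMatrix K).mulVecLin = ⊥ :=
  LinearMap.ker_eq_bot.mpr <| mulVec_injective_of_det_ne_zero <| by
    rw [det_permutation]
    exact ((Equiv.Perm.sign σ).isUnit.map (Int.castRingHom K)).ne_zero

theorem zdi_revPerm_permMatrix (m : ℕ) :
    zdi ((Fin.revPerm : Equiv.Perm (Fin m)).permMatrix ℂ) = m / 2 := by
  refine le_antisymm ?_ ?_
  · simpa using zdi_le_card_div_two_of_ker_eq_bot (ker_mulVecLin_permMatrix (K := ℂ) Fin.revPerm)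
  · refine le_zdi_of_submatrix_eq_zero (Fin.castLE_injective (Nat.div_le_self m 2)) ?_
    ext a b
    simp only [submatrix_apply, PEquiv.toMatrix_apply, Equiv.toPEquiv_apply, Fin.revPerm_apply,
      Option.mem_def, Option.some.injEq, Fin.ext_iff, Fin.val_rev, Fin.val_castLE,
      Matrix.zero_apply, ite_eq_right_iff, one_ne_zero, imp_false]
    omega

/-- Lemma 3.1. -/
theorem zdi_gt_half_zero_eigenvalue {n : ℕ} (A : Matrix (Fin n) (Fin n) ℂ) :
    (n / 2 < zdi A → 2 * zdi A - n ≤ Module.finrank ℂ (LinearMap.ker A.mulVecLin)) ∧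
    (∀ m : ℕ, 1 ≤ m → ∃ B : Matrix (Fin m) (Fin m) ℂ, zdi B = m / 2 ∧
      LinearMap.ker B.mulVecLin = ⊥) :=
  ⟨fun _ => by simpa using two_mul_zdi_sub_card_le_finrank_ker A,
    fun m _ => ⟨_, zdi_revPerm_permMatrix m, ker_mulVecLin_permMatrix Fin.revPerm⟩⟩
end

section
/- Let A be an n-by-n nilpotent complex matrix with n ≥ 3. Then d(A) = n − 1 if and only if A is unitarily similar to a block-diagonal matrix C ⊕ 0_{n−3}, where C is the 3-by-3 matrix with entries C(1,2) = a, C(2,3) = b and all other entries 0, for some complex numbers a and b that are not both 0. -/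
open Matrix Polynomial

/-!
If `V*AV = 0` for an isometry `V` with `n - 1` columns, extend `V` to a unitary `U`: then `U*AU`
vanishes outside one row and one column `l`, i.e. `U*AU = x eₗᵀ + eₗ rᵀ`. Nilpotency makes the
traces of `U*AU` and of its square vanish, which gives `(U*AU)ₗₗ = 0` and `x ⬝ r = 0`. So `x`,
`eₗ` and `conj r` are pairwise orthogonal, and passing to an orthonormal basis through them turns
`U*AU` into `‖x‖ E₀₁ + ‖r‖ E₁₂`. Conversely, `a E₀₁ + b E₁₂` vanishes on the `n - 1` coordinates
other than the middle one, and `d(A) = n` only for `A = 0`.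
-/

open Function

section Submatrix

variable {m k k' l α : Type*} [Fintype m] [CommSemiring α] [StarRing α]

theorem Matrix.submatrix_conjTranspose_mul (V : Matrix m k α) (W : Matrix m k' α) (f : l → k)
    (g : l → k') : (Vᴴ * W).submatrix f g = (V.submatrix id f)ᴴ * W.submatrix id g := by
  ext i j
  simp [mul_apply]

theorem Matrix.submatrix_conjTranspose_mul_mul (V : Matrix m k α) (A : Matrix m m α)
    (W : Matrix m k' α) (f : l → k) (g : l → k') :
    (Vᴴ * A * W).submatrix f g = (V.submatrix id f)ᴴ * A * W.submatrix id g := by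
  ext i j
  simp [mul_apply]

end Submatrix

section Compression

variable {m k k' l : Type*} [Fintype m] [Fintype k] [DecidableEq k] [Fintype k'] [DecidableEq k']
  {A : Matrix m m ℂ}

def CompressesToZero (A : Matrix m m ℂ) (k : Type*) [Fintype k] [DecidableEq k] : Prop :=
  ∃ V : Matrix m k ℂ, Vᴴ * V = 1 ∧ Vᴴ * A * V = 0

theorem CompressesToZero.comp (h : CompressesToZero A k) {f : k' → k} (hf : Injective f) :
    CompressesToZero A k' := by
  obtain ⟨V, hV, hAV⟩ := h
  refine ⟨V.submatrix id f, ?_, ?_⟩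
  · simpa [hV, submatrix_one f hf] using (submatrix_conjTranspose_mul V V f f).symm
  · simpa [hAV] using (submatrix_conjTranspose_mul_mul V A V f f).symm

theorem compressesToZero_of_submatrix_eq_zero [DecidableEq m] {f : k → m} (hf : Injective f)
    (h : A.submatrix f f = 0) : CompressesToZero A k := by
  refine ⟨(1 : Matrix m m ℂ).submatrix id f, ?_, ?_⟩
  · simpa [submatrix_one f hf] using (submatrix_conjTranspose_mul (1 : Matrix m m ℂ) 1 f f).symm
  · simpa [h] using (submatrix_conjTranspose_mul_mul (1 : Matrix m m ℂ) A 1 f f).symm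

theorem CompressesToZero.of_isometry [Fintype l] [DecidableEq l] {V : Matrix m l ℂ}
    (hV : Vᴴ * V = 1) (h : CompressesToZero (Vᴴ * A * V) k) : CompressesToZero A k := by
  obtain ⟨W, hW, hAW⟩ := h
  refine ⟨V * W, ?_, ?_⟩
  · rw [conjTranspose_mul, Matrix.mul_assoc, ← Matrix.mul_assoc Vᴴ, hV, Matrix.one_mul, hW]
  · simpa only [conjTranspose_mul, Matrix.mul_assoc] using hAW

theorem CompressesToZero.card_le (h : CompressesToZero A k) :
    Fintype.card k ≤ Fintype.card m := by
  obtain ⟨V, hV, -⟩ := h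
  calc Fintype.card k = (Vᴴ * V).rank := by rw [hV, rank_one]
    _ ≤ V.rank := rank_mul_le_right _ _
    _ ≤ Fintype.card m := rank_le_card_height V

theorem CompressesToZero.eq_zero [DecidableEq m] (h : CompressesToZero A k)
    (hk : Fintype.card m ≤ Fintype.card k) : A = 0 := by
  have e : m ≃ k := Fintype.equivOfCardEq (hk.antisymm h.card_le)
  obtain ⟨V, hV, hAV⟩ := h
  have hV' : V * Vᴴ = 1 := (mul_eq_one_comm_of_equiv e.symm).1 hV
  calc A = (V * Vᴴ) * A * (V * Vᴴ) := by rw [hV', Matrix.one_mul, Matrix.mul_one]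
    _ = V * (Vᴴ * A * V) * Vᴴ := by simp only [Matrix.mul_assoc]
    _ = 0 := by rw [hAV, Matrix.mul_zero, Matrix.zero_mul]

theorem zdi_eq_card_sub_one_iff [DecidableEq m] (hm : 0 < Fintype.card m) :
    zdi A = Fintype.card m - 1 ↔ CompressesToZero A (Fin (Fintype.card m - 1)) ∧ A ≠ 0 := by
  set S := {k | CompressesToZero A (Fin k)}
  have hS : zdi A = sSup S := rfl
  have hbdd : BddAbove S := ⟨Fintype.card m, fun k hk => by simpa using hk.card_le⟩
  have h0 : 0 ∈ S :=
    compressesToZero_of_submatrix_eq_zero (f := Fin.elim0) (fun i => i.elim0)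
      (Subsingleton.elim _ _)
  constructor
  · intro h
    refine ⟨h ▸ hS ▸ Nat.sSup_mem ⟨0, h0⟩ hbdd, ?_⟩
    rintro rfl
    have hmem : Fintype.card m ∈ S :=
      compressesToZero_of_submatrix_eq_zero (Fintype.equivFin m).symm.injective (by simp)
    have := le_csSup hbdd hmem
    omega
  · rintro ⟨hmem, hA⟩
    refine hS ▸ le_antisymm (csSup_le ⟨0, h0⟩ fun k hk => ?_) (le_csSup hbdd hmem)
    by_contra! hlt
    exact hA (CompressesToZero.eq_zero hk (by simp; omega))

end Compression

section OrthonormalExtension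

variable {𝕜 E ι k : Type*} [RCLike 𝕜] [NormedAddCommGroup E] [InnerProductSpace 𝕜 E]
  [FiniteDimensional 𝕜 E] [Fintype ι] {f : k → ι}

theorem Orthonormal.exists_orthonormalBasis_extension_of_injective
    (hcard : Module.finrank 𝕜 E = Fintype.card ι) {v : k → E} (hv : Orthonormal 𝕜 v)
    (hf : Injective f) : ∃ b : OrthonormalBasis ι 𝕜 E, ∀ j, b (f j) = v j := by
  have hw : (Set.range f).domRestrict (extend f v 0) = v ∘ Set.rangeSplitting f := by
    ext x
    rw [Set.domRestrict_apply, ← Set.apply_rangeSplitting f x, hf.extend_apply]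
    rfl
  obtain ⟨b, hb⟩ := Orthonormal.exists_orthonormalBasis_extension_of_card_eq hcard
    (hw ▸ hv.comp _ (Set.rangeSplitting_injective f))
  exact ⟨b, fun j => (hb _ (Set.mem_range_self j)).trans (hf.extend_apply _ _ _)⟩

theorem exists_orthonormalBasis_smul_eq_of_pairwise_inner_eq_zero
    (hcard : Module.finrank 𝕜 E = Fintype.card ι) {v : k → E}
    (hv : Pairwise fun i j => inner 𝕜 (v i) (v j) = 0) (hf : Injective f) :
    ∃ b : OrthonormalBasis ι 𝕜 E, ∀ j, v j = (‖v j‖ : 𝕜) • b (f j) := by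
  let k' := {j // v j ≠ 0}
  have hu : Orthonormal 𝕜 fun j : k' => (‖v j‖⁻¹ : 𝕜) • v j := by
    refine ⟨fun j => norm_smul_inv_norm j.2, fun i j hij => ?_⟩
    dsimp only
    rw [inner_smul_left, inner_smul_right, hv (Subtype.coe_ne_coe.2 hij), mul_zero, mul_zero]
  obtain ⟨b, hb⟩ :=
    hu.exists_orthonormalBasis_extension_of_injective hcard (hf.comp Subtype.val_injective)
  refine ⟨b, fun j => ?_⟩
  by_cases hj : v j = 0
  · simp [hj]
  · rw [show f j = (f ∘ Subtype.val) (⟨j, hj⟩ : k') from rfl, hb,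
      smul_inv_smul₀ (by simpa using hj)]

end OrthonormalExtension

theorem OrthonormalBasis.toMatrix_basisFun_apply {m : Type*} [Fintype m]
    (b : OrthonormalBasis m ℂ (EuclideanSpace ℂ m)) (i j : m) :
    (EuclideanSpace.basisFun m ℂ).toBasis.toMatrix b i j = b j i := rfl

theorem OrthonormalBasis.conjTranspose_toMatrix_basisFun_mulVec {m : Type*} [Fintype m]
    [DecidableEq m] (b : OrthonormalBasis m ℂ (EuclideanSpace ℂ m)) (j : m) :
    ((EuclideanSpace.basisFun m ℂ).toBasis.toMatrix b)ᴴ *ᵥ WithLp.ofLp (b j) = Pi.single j 1 := by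
  set U := (EuclideanSpace.basisFun m ℂ).toBasis.toMatrix b
  have hcol : WithLp.ofLp (b j) = U *ᵥ Pi.single j 1 := by
    ext i
    simp [U, toMatrix_basisFun_apply]
  have hU : Uᴴ * U = 1 := (mem_unitaryGroup_iff').1 <|
    (EuclideanSpace.basisFun m ℂ).toMatrix_orthonormalBasis_mem_unitary b
  rw [hcol, mulVec_mulVec, hU, one_mulVec]

theorem CompressesToZero.exists_unitary_submatrix_eq_zero {m k : Type*} [Fintype m]
    [DecidableEq m] [Fintype k] [DecidableEq k] {A : Matrix m m ℂ} (h : CompressesToZero A k)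
    {f : k → m} (hf : Injective f) : ∃ U ∈ unitaryGroup m ℂ, (Uᴴ * A * U).submatrix f f = 0 := by
  obtain ⟨V, hV, hAV⟩ := h
  have hv : Orthonormal ℂ fun j => WithLp.toLp 2 fun i => V i j := by
    rw [orthonormal_iff_ite]
    intro i j
    simpa [EuclideanSpace.inner_toLp_toLp, dotProduct, mul_apply, mul_comm, one_apply]
      using congr_fun₂ hV i j
  obtain ⟨b, hb⟩ := hv.exists_orthonormalBasis_extension_of_injective (by simp) hf
  let U := (EuclideanSpace.basisFun m ℂ).toBasis.toMatrix b
  have hUV : U.submatrix id f = V := by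
    ext i j
    simp [U, OrthonormalBasis.toMatrix_basisFun_apply, hb]
  refine ⟨U, (EuclideanSpace.basisFun m ℂ).toMatrix_orthonormalBasis_mem_unitary b, ?_⟩
  rw [submatrix_conjTranspose_mul_mul, hUV, hAV]

section Similarity

variable {m l : Type*} [Fintype m] [DecidableEq m] [Fintype l] [DecidableEq l]
  {A B C : Matrix m m ℂ}

theorem UnitSim.trans (h₁ : UnitSim A B) (h₂ : UnitSim B C) : UnitSim A C := by
  obtain ⟨U, hU, rfl⟩ := h₁
  obtain ⟨W, hW, rfl⟩ := h₂
  exact ⟨U * W, mul_mem hU hW, by simp only [conjTranspose_mul, Matrix.mul_assoc]⟩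

theorem UnitSim.eq_zero (h : UnitSim A 0) : A = 0 := by
  obtain ⟨U, hU, hA⟩ := h
  have hUU : U * Uᴴ = 1 := (mem_unitaryGroup_iff).1 hU
  calc A = (U * Uᴴ) * A * (U * Uᴴ) := by rw [hUU, Matrix.one_mul, Matrix.mul_one]
    _ = U * (Uᴴ * A * U) * Uᴴ := by simp only [Matrix.mul_assoc]
    _ = 0 := by rw [hA, Matrix.mul_zero, Matrix.zero_mul]

theorem Matrix.reindex_conjTranspose_mul_mul (e : m ≃ l) (U A : Matrix m m ℂ) :
    reindex e e (Uᴴ * A * U) = (reindex e e U)ᴴ * reindex e e A * reindex e e U := by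
  rw [conjTranspose_reindex]
  simp only [← coe_reindexAlgEquiv ℂ ℂ, map_mul]

theorem UnitSim.unitSimG_reindex (h : UnitSim A B) (e : m ≃ l) : UnitSimG A (reindex e e B) := by
  obtain ⟨U, hU, rfl⟩ := h
  refine ⟨e, reindex e e U, ?_, (reindex_conjTranspose_mul_mul e U A).symm⟩
  rw [mem_unitaryGroup_iff'] at hU ⊢
  have := congrArg (reindexAlgEquiv ℂ ℂ e) hU
  rwa [map_mul, map_one, coe_reindexAlgEquiv, star_eq_conjTranspose, ← conjTranspose_reindex]
    at this

theorem UnitSimG.exists_isometry {B : Matrix l l ℂ} (h : UnitSimG A B) :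
    ∃ V : Matrix m l ℂ, Vᴴ * V = 1 ∧ Vᴴ * A * V = B := by
  obtain ⟨e, U, hU, rfl⟩ := h
  refine ⟨U.submatrix e id, ?_, ?_⟩
  · rw [conjTranspose_submatrix, submatrix_mul_equiv, submatrix_id_id]
    exact (mem_unitaryGroup_iff').1 hU
  · have hA : A = (reindex e e A).submatrix e e := by simp [reindex_apply]
    conv_lhs => rw [hA]
    rw [conjTranspose_submatrix, submatrix_mul_equiv, submatrix_mul_equiv, submatrix_id_id]

theorem UnitSimG.compressesToZero {k : Type*} [Fintype k] [DecidableEq k] {B : Matrix l l ℂ}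
    (h : UnitSimG A B) (hB : CompressesToZero B k) : CompressesToZero A k := by
  obtain ⟨V, hV, rfl⟩ := h.exists_isometry
  exact hB.of_isometry hV

theorem UnitSimG.ne_zero {B : Matrix l l ℂ} (h : UnitSimG A B) (hB : B ≠ 0) : A ≠ 0 := by
  obtain ⟨V, -, rfl⟩ := h.exists_isometry
  rintro rfl
  simp at hB

end Similarity

theorem Matrix.vecMulVec_single_single {ι κ α : Type*} [DecidableEq ι] [DecidableEq κ]
    [MulZeroClass α] (i : ι) (j : κ) (a b : α) :
    vecMulVec (Pi.single i a) (Pi.single j b) = single i j (a * b) := by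
  ext p q
  by_cases hp : i = p <;> by_cases hq : j = q <;> simp [vecMulVec_apply, eq_comm, hp, hq]

theorem Matrix.eq_vecMulVec_add_vecMulVec_of_apply_eq_zero {ι α : Type*} [DecidableEq ι]
    [NonAssocSemiring α] {M : Matrix ι ι α} {l : ι} (h : ∀ i j, i ≠ l → j ≠ l → M i j = 0)
    (hl : M l l = 0) :
    M = vecMulVec (fun i => M i l) (Pi.single l 1) + vecMulVec (Pi.single l 1) (M l) := by
  ext i j
  by_cases hi : i = l <;> by_cases hj : j = l <;> simp [vecMulVec_apply, hi, hj, h i j, hl]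

section RankTwo

variable {ι : Type*} [Fintype ι] [DecidableEq ι]

theorem Matrix.isNilpotent_conjTranspose_mul_mul {U A : Matrix ι ι ℂ} (hU : U ∈ unitaryGroup ι ℂ)
    (hA : IsNilpotent A) : IsNilpotent (Uᴴ * A * U) :=
  hA.map (Unitary.conjStarAlgAut ℂ _ ⟨U, hU⟩).symm

theorem exists_unitSim_vecMulVec_add_vecMulVec {f : Fin 3 → ι} (hf : Injective f)
    {x r : ι → ℂ} (hx : x (f 1) = 0) (hr : r (f 1) = 0) (hxr : x ⬝ᵥ r = 0) :
    ∃ a c : ℂ, UnitSim (vecMulVec x (Pi.single (f 1) 1) + vecMulVec (Pi.single (f 1) 1) r)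
      (single (f 0) (f 1) a + single (f 1) (f 2) c) := by
  set e : ι → ℂ := Pi.single (f 1) 1
  let v : Fin 3 → EuclideanSpace ℂ ι :=
    ![WithLp.toLp 2 x, WithLp.toLp 2 e, WithLp.toLp 2 (star r)]
  have hv : Pairwise fun i j => inner ℂ (v i) (v j) = 0 := by
    intro i j hij
    fin_cases i <;> fin_cases j <;>
      simp_all [v, e, EuclideanSpace.inner_toLp_toLp, -PiLp.toLp_single, star_dotProduct_star,
        dotProduct_comm]
  obtain ⟨b, hb⟩ := exists_orthonormalBasis_smul_eq_of_pairwise_inner_eq_zero (by simp) hv hf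
  let U := (EuclideanSpace.basisFun ι ℂ).toBasis.toMatrix b
  have hU : U ∈ unitaryGroup ι ℂ :=
    (EuclideanSpace.basisFun ι ℂ).toMatrix_orthonormalBasis_mem_unitary b
  have hUv : ∀ j, Uᴴ *ᵥ WithLp.ofLp (v j) = (‖v j‖ : ℂ) • Pi.single (f j) 1 := by
    intro j
    nth_rw 1 [hb j]
    rw [WithLp.ofLp_smul, mulVec_smul, b.conjTranspose_toMatrix_basisFun_mulVec]
    rfl
  have hrow : ∀ w, w ᵥ* U = star (Uᴴ *ᵥ star w) := fun w => by
    rw [mulVec_conjTranspose, star_star, star_star]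
  have hx' : Uᴴ *ᵥ x = (‖v 0‖ : ℂ) • Pi.single (f 0) 1 := hUv 0
  have he : Uᴴ *ᵥ e = Pi.single (f 1) 1 := by
    have := hUv 1
    rwa [show ‖v 1‖ = 1 by simp [v, e], Complex.ofReal_one, one_smul] at this
  have he' : e ᵥ* U = Pi.single (f 1) 1 := by
    rw [hrow, show star e = e by simp [e], he]
    simp
  have hr' : r ᵥ* U = (‖v 2‖ : ℂ) • Pi.single (f 2) 1 := by
    rw [hrow, show Uᴴ *ᵥ star r = _ from hUv 2]
    simp
  refine ⟨‖v 0‖, ‖v 2‖, U, hU, ?_⟩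
  rw [Matrix.mul_add, Matrix.add_mul, mul_vecMulVec, vecMulVec_mul, mul_vecMulVec, vecMulVec_mul,
    hx', he, he', hr', ← Pi.single_smul', ← Pi.single_smul', vecMulVec_single_single,
    vecMulVec_single_single]
  simp

theorem exists_unitSim_single_add_single_of_isNilpotent {f : Fin 3 → ι} (hf : Injective f)
    {M : Matrix ι ι ℂ} (hM : IsNilpotent M) (h : ∀ i j, i ≠ f 1 → j ≠ f 1 → M i j = 0) :
    ∃ a c : ℂ, UnitSim M (single (f 0) (f 1) a + single (f 1) (f 2) c) := by
  have hl : M (f 1) (f 1) = 0 := by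
    have htr : M.trace = M (f 1) (f 1) :=
      Finset.sum_eq_single (f 1) (fun i _ hi => h i i hi hi) (by simp)
    exact htr ▸ (isNilpotent_trace_of_isNilpotent hM).eq_zero
  have hM' := eq_vecMulVec_add_vecMulVec_of_apply_eq_zero h hl
  have hxr : (fun i => M i (f 1)) ⬝ᵥ M (f 1) = 0 := by
    have h2 := (isNilpotent_trace_of_isNilpotent ((Commute.refl M).isNilpotent_mul_left hM)).eq_zero
    rw [hM'] at h2
    simpa [Matrix.add_mul, Matrix.mul_add, vecMulVec_mul_vecMulVec, trace_vecMulVec, hl,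
      dotProduct_comm (M (f 1))] using h2
  obtain ⟨a, c, hsim⟩ :=
    exists_unitSim_vecMulVec_add_vecMulVec (x := fun i => M i (f 1)) hf hl hl hxr
  exact ⟨a, c, hM' ▸ hsim⟩

theorem CompressesToZero.exists_unitSim_single_add_single {f : Fin 3 → ι} (hf : Injective f)
    {A : Matrix ι ι ℂ} (hA : IsNilpotent A) (h : CompressesToZero A {i // i ≠ f 1}) :
    ∃ a c : ℂ, UnitSim A (single (f 0) (f 1) a + single (f 1) (f 2) c) := by
  obtain ⟨U, hU, hUA⟩ := h.exists_unitary_submatrix_eq_zero Subtype.val_injective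
  obtain ⟨a, c, hsim⟩ := exists_unitSim_single_add_single_of_isNilpotent hf
    (isNilpotent_conjTranspose_mul_mul hU hA) fun i j hi hj => congr_fun₂ hUA ⟨i, hi⟩ ⟨j, hj⟩
  exact ⟨a, c, UnitSim.trans ⟨U, hU, rfl⟩ hsim⟩

theorem compressesToZero_single_add_single (i j l : ι) (a b : ℂ) :
    CompressesToZero (single i j a + single j l b) {x // x ≠ j} :=
  compressesToZero_of_submatrix_eq_zero Subtype.val_injective <| by
    ext ⟨p, hp⟩ ⟨q, hq⟩
    simp [hp.symm, hq.symm]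

end RankTwo

theorem Matrix.single_add_single_eq_zero_iff {ι α : Type*} [DecidableEq ι] [AddZeroClass α]
    {i j : ι} (l : ι) (hij : i ≠ j) (a b : α) :
    single i j a + single j l b = 0 ↔ a = 0 ∧ b = 0 := by
  refine ⟨fun h => ⟨?_, ?_⟩, fun ⟨ha, hb⟩ => by simp [ha, hb]⟩
  · simpa [single_apply, hij.symm] using congr_fun₂ h i j
  · simpa [single_apply, hij] using congr_fun₂ h j l

theorem Matrix.fromBlocks_eq_single_add_single {α : Type*} [AddZeroClass α] (a b : α) (p : ℕ) :
    fromBlocks !![0, a, 0; 0, 0, b; 0, 0, 0] 0 0 (0 : Matrix (Fin p) (Fin p) α) =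
      single (.inl 0) (.inl 1) a + single (.inl 1) (.inl 2) b := by
  ext (i | i) (j | j)
  · fin_cases i <;> fin_cases j <;> simp
  all_goals simp

/-- Corollary 3.5. -/
theorem zdi_eq_n_sub_one_iff_of_nilpotent {n : ℕ} (hn : 3 ≤ n)
    (A : Matrix (Fin n) (Fin n) ℂ) (hA : IsNilpotent A) :
    zdi A = n - 1 ↔
    ∃ a b : ℂ, ¬(a = 0 ∧ b = 0) ∧
      UnitSimG A (Matrix.fromBlocks !![0, a, 0; 0, 0, b; 0, 0, 0] 0 0
        (0 : Matrix (Fin (n - 3)) (Fin (n - 3)) ℂ)) := by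
  have hzdi := zdi_eq_card_sub_one_iff (A := A) (by simp; omega)
  rw [Fintype.card_fin] at hzdi
  simp_rw [hzdi, fromBlocks_eq_single_add_single]
  constructor
  · rintro ⟨hV, hA0⟩
    let e : Fin n ≃ Fin 3 ⊕ Fin (n - 3) := Fintype.equivOfCardEq (by simp; omega)
    have hV' : CompressesToZero A {i // i ≠ e.symm (.inl 1)} :=
      hV.comp (Fintype.equivOfCardEq (by simp)).injective
    obtain ⟨a, c, hAT⟩ :=
      hV'.exists_unitSim_single_add_single (e.symm.injective.comp Sum.inl_injective) hA
    refine ⟨a, c, fun ⟨ha, hc⟩ => hA0 (UnitSim.eq_zero (by simpa [ha, hc] using hAT)), ?_⟩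
    simpa [reindex_apply, submatrix_add] using hAT.unitSimG_reindex e
  · rintro ⟨a, c, hac, hsim⟩
    refine ⟨?_, hsim.ne_zero ((single_add_single_eq_zero_iff _ (by simp) a c).not.2 hac)⟩
    exact (hsim.compressesToZero (compressesToZero_single_add_single _ _ _ a c)).comp
      (Fintype.equivOfCardEq (by simp; omega)).symm.injective
end

section
/- Let n ≥ 2 and let w_1, …, w_n be complex numbers. Let A be the n-by-n matrix with A(j, j+1) = w_j for 1 ≤ j ≤ n−1 and all other entries 0, and let A' be the matrix obtained from A by additionally setting A'(n, 1) = w_n. If w_1, …, w_{n−1} are all nonzero, then every eigenvalue of Re A has multiplicity 1; and if w_1, …, w_n are all nonzero, then every eigenvalue of Re A' has multiplicity at most 2. -/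
/-
With rows and columns indexed from `0`: for `r + 1 < n`, the last nonzero entry of row `r` of
`Re A - μ` is `w r / 2`, in column `r + 1`; the same holds for `Re A' - μ` except in row `0`, which
meets column `n - 1` through the corner entry `conj (w (n - 1)) / 2`. So on the kernel, row `r`
solves for `x (r + 1)` in terms of `x 0, …, x r`, and a kernel vector is determined by `x 0` for
`A`, and by `x 0, x 1` for `A'`.
-/

open Matrix Polynomial

namespace Matrix

variable {ι κ R : Type*} [Fintype ι] [LinearOrder ι]

theorem eq_zero_of_mulVec_eq_zero_of_forall_mem [NonUnitalNonAssocSemiring R] [NoZeroDivisors R]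
    {M : Matrix κ ι R} (S : Finset ι)
    (hM : ∀ j ∉ S, ∃ r, M r j ≠ 0 ∧ ∀ j', j < j' → M r j' = 0)
    {x : ι → R} (hx : M *ᵥ x = 0) (hS : ∀ j ∈ S, x j = 0) : x = 0 := by
  funext j
  induction j using WellFoundedLT.induction with
  | _ j ih =>
    by_cases hj : j ∈ S
    · exact hS j hj
    obtain ⟨r, hrj, hr⟩ := hM j hj
    have hrow : (M *ᵥ x) r = M r j * x j := by
      refine Finset.sum_eq_single j (fun j' _ hj' => ?_) (by simp)
      rcases hj'.lt_or_gt with h | h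
      · rw [ih j' h, Pi.zero_apply, mul_zero]
      · exact mul_eq_zero_of_left (hr j' h) _
    rw [hx, Pi.zero_apply, eq_comm, mul_eq_zero] at hrow
    exact hrow.resolve_left hrj

theorem finrank_ker_mulVecLin_le_card [Field R] {M : Matrix κ ι R} (S : Finset ι)
    (hM : ∀ j ∉ S, ∃ r, M r j ≠ 0 ∧ ∀ j', j < j' → M r j' = 0) :
    Module.finrank R (LinearMap.ker M.mulVecLin) ≤ S.card := by
  let restrict := (LinearMap.funLeft R R ((↑) : S → ι)).comp (LinearMap.ker M.mulVecLin).subtype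
  have hinj : Function.Injective restrict := by
    rw [← LinearMap.ker_eq_bot, LinearMap.ker_eq_bot']
    rintro ⟨x, hx⟩ hxS
    exact Subtype.ext <| eq_zero_of_mulVec_eq_zero_of_forall_mem S hM hx
      fun j hj => congrFun hxS ⟨j, hj⟩
  simpa using LinearMap.finrank_le_finrank_of_injective hinj

theorem finrank_ker_mulVecLin_le_of_superdiag [Field R] {n : ℕ}
    {M : Matrix (Fin n) (Fin n) R} (k : ℕ) (c : ℕ → R)
    (hM : ∀ r j : Fin n, k ≤ r → r < j → M r j = if (j : ℕ) = r + 1 then c r else 0)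
    (hc : ∀ r, k ≤ r → r + 1 < n → c r ≠ 0) :
    Module.finrank R (LinearMap.ker M.mulVecLin) ≤ k + 1 := by
  refine (finrank_ker_mulVecLin_le_card {j : Fin n | (j : ℕ) < k + 1} ?_).trans ?_
  · intro j hj
    simp only [Finset.mem_filter_univ, not_lt] at hj
    let r : Fin n := ⟨j - 1, by omega⟩
    have hr : (j : ℕ) = r + 1 := by simp only [r]; omega
    refine ⟨r, ?_, fun j' hj' => ?_⟩
    · rw [hM r j (by omega) (by rw [Fin.lt_def]; omega), if_pos hr]
      exact hc r (by omega) (by omega)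
    · rw [Fin.lt_def] at hj'
      rw [hM r j' (by omega) (by rw [Fin.lt_def]; omega), if_neg (by omega)]
  · rw [Fin.card_filter_val_lt]
    exact min_le_right _ _

end Matrix

theorem matRe_sub_smul_one_apply_of_ne {m : Type*} [DecidableEq m] (A : Matrix m m ℂ) (μ : ℂ)
    {i j : m} (h : i ≠ j) : (matRe A - μ • 1) i j = 2⁻¹ * (A i j + star (A j i)) := by
  simp [matRe, one_apply_ne h, mul_add]

theorem matRe_superMat_sub_smul_one_apply_of_lt {n : ℕ} (w : ℕ → ℂ) (μ : ℂ) {i j : Fin n}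
    (h : i < j) :
    (matRe (superMat n w) - μ • 1) i j = if (j : ℕ) = i + 1 then 2⁻¹ * w i else 0 := by
  rw [matRe_sub_smul_one_apply_of_ne _ _ h.ne]
  replace h : (i : ℕ) < j := h
  simp only [superMat, of_apply, if_neg (show (i : ℕ) ≠ j + 1 by omega)]
  split_ifs <;> simp

theorem matRe_cycMat_sub_smul_one_apply_of_lt {n : ℕ} (w : ℕ → ℂ) (μ : ℂ) {i j : Fin n}
    (hi : 0 < (i : ℕ)) (h : i < j) :
    (matRe (cycMat n w) - μ • 1) i j = if (j : ℕ) = i + 1 then 2⁻¹ * w i else 0 := by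
  rw [matRe_sub_smul_one_apply_of_ne _ _ h.ne]
  replace h : (i : ℕ) < j := h
  have hj := j.isLt
  simp only [cycMat, of_apply, Nat.mod_eq_of_lt (show (i : ℕ) + 1 < n by omega)]
  have hji : (i : ℕ) ≠ (j + 1) % n := by
    rcases (show (j : ℕ) + 1 < n ∨ (j : ℕ) + 1 = n by omega) with hjn | hjn
    · rw [Nat.mod_eq_of_lt hjn]; omega
    · rw [hjn, Nat.mod_self]; omega
  rw [if_neg hji]
  split_ifs <;> simp

theorem eigenvalue_multiplicity_shift_general {n : ℕ} (w : ℕ → ℂ) :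
    ((∀ j, j < n - 1 → w j ≠ 0) →
      ∀ μ : ℝ, Module.finrank ℂ
        (LinearMap.ker (matRe (superMat n w) - (μ : ℂ) • 1).mulVecLin) ≤ 1) ∧
    ((∀ j, j < n → w j ≠ 0) →
      ∀ μ : ℝ, Module.finrank ℂ
        (LinearMap.ker (matRe (cycMat n w) - (μ : ℂ) • 1).mulVecLin) ≤ 2) := by
  constructor
  · intro hw μ
    exact finrank_ker_mulVecLin_le_of_superdiag 0 (fun r => 2⁻¹ * w r)
      (fun _ _ _ => matRe_superMat_sub_smul_one_apply_of_lt w μ)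
      (fun r _ hr => mul_ne_zero (by norm_num) (hw r (by omega)))
  · intro hw μ
    exact finrank_ker_mulVecLin_le_of_superdiag 1 (fun r => 2⁻¹ * w r)
      (fun _ _ hr => matRe_cycMat_sub_smul_one_apply_of_lt w μ hr)
      (fun r _ hr => mul_ne_zero (by norm_num) (hw r (by omega)))

/-- Lemma 4.3. -/
theorem eigenvalue_multiplicity_shift {n : ℕ} (hn : 2 ≤ n) (w : ℕ → ℂ) :
    ((∀ j, j < n - 1 → w j ≠ 0) →
      ∀ μ : ℝ, Module.finrank ℂ
        (LinearMap.ker (matRe (superMat n w) - (μ : ℂ) • 1).mulVecLin) ≤ 1) ∧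
    ((∀ j, j < n → w j ≠ 0) →
      ∀ μ : ℝ, Module.finrank ℂ
        (LinearMap.ker (matRe (cycMat n w) - (μ : ℂ) • 1).mulVecLin) ≤ 2) :=
  eigenvalue_multiplicity_shift_general w
end
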